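/- Let X be a closed linear subspace of c₀(Γ). Then for any x ∈ X and any weakly null sequence (x_n) in X, one has limsup_n ‖x_n + x‖ = max(‖x‖, limsup_n ‖x_n‖). -/

import Mathlib

/-!
A weakly null sequence is bounded (uniform boundedness) and tends to zero coordinatewise, while
`x` vanishes at infinity: given `ε > 0`, `x` is `ε`-small off a finite set of coordinates, on
which `u n` is eventually `ε`-small. So `u n` and `x` are eventually `ε`-disjointly supported,
and in the sup norm the norm of a sum of disjointly supported vectors is the maximum of their
norms. Hence `‖u n + x‖ - max ‖x‖ ‖u n‖ → 0`, and `max ‖x‖` commutes with `limsup`.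
-/

open Filter Metric Topology Pointwise NormedSpace

set_option maxHeartbeats 1000000
set_option synthInstance.maxHeartbeats 400000

noncomputable section

/-- `ca (x_k) = inf_n diam {x_k : k ≥ n}`: measures how far `(x_k)` is from being norm Cauchy. -/
def ca {Z : Type*} [NormedAddCommGroup Z] (x : ℕ → Z) : ℝ :=
  ⨅ n : ℕ, Metric.diam (x '' Set.Ici n)

/-- `δ (x_k) = sup_{f ∈ B_{Z*}} inf_n diam {f (x_k) : k ≥ n}`: measures how far `(x_k)` is from
being weakly Cauchy. -/
def qdelta {Z : Type*} [NormedAddCommGroup Z] [NormedSpace ℝ Z] (x : ℕ → Z) : ℝ :=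
  ⨆ f : Metric.closedBall (0 : StrongDual ℝ Z) 1,
    ⨅ n : ℕ, Metric.diam ((fun k => (f : StrongDual ℝ Z) (x k)) '' Set.Ici n)

/-- The space `c₀(Γ)` of functions vanishing at infinity (i.e. for every `ε > 0` the set
`{γ | ε ≤ |f γ|}` is finite, equivalently `f → 0` along the cofinite filter), realized as a
submodule of `ℓ∞(Γ)` with the supremum norm. -/
def c0Submodule (Γ : Type*) : Subspace ℝ (lp (fun _ : Γ => ℝ) ⊤) where
  carrier := {f | Tendsto (fun γ => f γ) cofinite (𝓝 0)}
  add_mem' := by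
    intro f g hf hg
    have := hf.add hg
    simpa [lp.coeFn_add] using this
  zero_mem' := by
    simpa [lp.coeFn_zero] using (tendsto_const_nhds : Tendsto (fun _ : Γ => (0:ℝ)) cofinite (𝓝 0))
  smul_mem' := by
    intro c f hf
    have : Tendsto (fun γ => c * f γ) cofinite (𝓝 (c * 0)) := hf.const_mul c
    simpa [lp.coeFn_smul, smul_eq_mul] using this

theorem exists_forall_norm_le_of_forall_bddAbove_dual {𝕜 E ι : Type*} [RCLike 𝕜]
    [NormedAddCommGroup E] [NormedSpace 𝕜 E] {u : ι → E}
    (h : ∀ f : StrongDual 𝕜 E, BddAbove (Set.range fun i => ‖f (u i)‖)) :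
    ∃ C, ∀ i, ‖u i‖ ≤ C := by
  obtain ⟨C, hC⟩ := banach_steinhaus (g := fun i => inclusionInDoubleDualLi 𝕜 (u i)) fun f => by
    obtain ⟨C, hC⟩ := h f
    exact ⟨C, fun i => hC ⟨i, rfl⟩⟩
  exact ⟨C, fun i => (LinearIsometry.norm_map _ _).symm.trans_le (hC i)⟩

theorem Real.limsup_eq_of_tendsto_sub {ι : Type*} {l : Filter ι} [l.NeBot] {a b : ι → ℝ}
    (hab : Tendsto (a - b) l (𝓝 0)) (hb : IsBoundedUnder (· ≤ ·) l b)
    (hb' : IsBoundedUnder (· ≥ ·) l b) :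
    limsup a l = limsup b l := by
  have hd : IsBoundedUnder (· ≤ ·) l (a - b) := hab.isBoundedUnder_le
  have hd' : IsBoundedUnder (· ≥ ·) l (a - b) := hab.isBoundedUnder_ge
  have hsplit : a = b + (a - b) := by abel
  rw [hsplit]
  apply le_antisymm
  · simpa [hab.limsup_eq] using limsup_add_le hb' hb hd'.isCoboundedUnder_le hd
  · simpa [hab.liminf_eq] using le_limsup_add hb hb'.isCoboundedUnder_le hd hd'

theorem eventually_forall_norm_le_or_norm_le {ι Γ : Type*} {E : Γ → Type*}
    [∀ γ, NormedAddCommGroup (E γ)] {l : Filter ι} {v : ι → ∀ γ, E γ} {x : ∀ γ, E γ}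
    (hv : ∀ γ, Tendsto (fun i => v i γ) l (𝓝 0))
    (hx : Tendsto (fun γ => ‖x γ‖) cofinite (𝓝 0)) {ε : ℝ} (hε : 0 < ε) :
    ∀ᶠ i in l, ∀ γ, ‖v i γ‖ ≤ ε ∨ ‖x γ‖ ≤ ε := by
  have hfin : {γ | ¬‖x γ‖ ≤ ε}.Finite := by
    simpa using eventually_cofinite.1 (hx.eventually (eventually_le_nhds hε))
  have hsmall : ∀ γ ∈ hfin.toFinset, ∀ᶠ i in l, ‖v i γ‖ ≤ ε := fun γ _ =>
    (hv γ).norm.eventually (by simpa using eventually_le_nhds hε)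
  filter_upwards [(eventually_all_finset _).2 hsmall] with i hi γ
  by_cases hγ : ‖x γ‖ ≤ ε
  · exact Or.inr hγ
  · exact Or.inl (hi γ (hfin.mem_toFinset.2 hγ))

namespace lp

variable {Γ : Type*} {E : Γ → Type*} [∀ γ, NormedAddCommGroup (E γ)] {f g : lp E ⊤} {ε : ℝ}

theorem norm_le_norm_add_add (hε : 0 ≤ ε) (h : ∀ γ, ‖f γ‖ ≤ ε ∨ ‖g γ‖ ≤ ε) :
    ‖f‖ ≤ ‖f + g‖ + ε := by
  refine norm_le_of_forall_le (by positivity) fun γ => ?_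
  rcases h γ with hf | hg
  · linarith [norm_nonneg (f + g)]
  · calc ‖f γ‖ = ‖(f + g) γ - g γ‖ := by simp
      _ ≤ ‖(f + g) γ‖ + ‖g γ‖ := norm_sub_le _ _
      _ ≤ ‖f + g‖ + ε := add_le_add (norm_apply_le_norm ENNReal.top_ne_zero _ _) hg

theorem norm_add_le_max_add (hε : 0 ≤ ε) (h : ∀ γ, ‖f γ‖ ≤ ε ∨ ‖g γ‖ ≤ ε) :
    ‖f + g‖ ≤ max ‖f‖ ‖g‖ + ε := by
  refine norm_le_of_forall_le (by positivity) fun γ => ?_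
  have hf := norm_apply_le_norm ENNReal.top_ne_zero f γ
  have hg := norm_apply_le_norm ENNReal.top_ne_zero g γ
  calc ‖(f + g) γ‖ ≤ ‖f γ‖ + ‖g γ‖ := norm_add_le _ _
    _ ≤ max ‖f‖ ‖g‖ + ε := by
      rcases h γ with hfε | hgε
      · linarith [le_max_right ‖f‖ ‖g‖]
      · linarith [le_max_left ‖f‖ ‖g‖]

theorem abs_norm_add_sub_max_le (hε : 0 ≤ ε) (h : ∀ γ, ‖f γ‖ ≤ ε ∨ ‖g γ‖ ≤ ε) :
    |‖f + g‖ - max ‖f‖ ‖g‖| ≤ ε := by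
  have hf := norm_le_norm_add_add hε h
  have hg := norm_le_norm_add_add hε fun γ => (h γ).symm
  rw [add_comm g] at hg
  rw [abs_le]
  constructor
  · linarith [max_le_iff.2 ⟨hf, hg⟩]
  · linarith [norm_add_le_max_add hε h]

variable {ι : Type*} {l : Filter ι} {x : lp E ⊤} {v : ι → lp E ⊤}

theorem tendsto_norm_add_sub_max (hv : ∀ γ, Tendsto (fun i => v i γ) l (𝓝 0))
    (hx : Tendsto (fun γ => ‖x γ‖) cofinite (𝓝 0)) :
    Tendsto (fun i => ‖v i + x‖ - max ‖x‖ ‖v i‖) l (𝓝 0) := by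
  refine Metric.tendsto_nhds.2 fun ε hε => ?_
  filter_upwards [eventually_forall_norm_le_or_norm_le hv hx (half_pos hε)] with i hi
  rw [Real.dist_0_eq_abs, max_comm]
  exact (abs_norm_add_sub_max_le (half_pos hε).le hi).trans_lt (half_lt_self hε)

theorem limsup_norm_add_eq_max [l.NeBot] (hv : ∀ γ, Tendsto (fun i => v i γ) l (𝓝 0))
    (hx : Tendsto (fun γ => ‖x γ‖) cofinite (𝓝 0)) (hbdd : IsBoundedUnder (· ≤ ·) l (‖v ·‖)) :
    limsup (fun i => ‖v i + x‖) l = max ‖x‖ (limsup (‖v ·‖) l) := by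
  have hmono : Monotone (max ‖x‖) := fun _ _ => max_le_max_left _
  calc limsup (fun i => ‖v i + x‖) l = limsup (fun i => max ‖x‖ ‖v i‖) l :=
        Real.limsup_eq_of_tendsto_sub (tendsto_norm_add_sub_max hv hx)
          (hmono.isBoundedUnder_le_comp hbdd) (isBoundedUnder_of ⟨‖x‖, fun _ => le_max_left _ _⟩)
    _ = max ‖x‖ (limsup (‖v ·‖) l) :=
        (hmono.map_limsup_of_continuousAt _ (continuous_const.max continuous_id).continuousAt hbdd
          (isCoboundedUnder_le_of_le l fun _ => norm_nonneg _)).symm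

end lp

theorem limsup_norm_add_of_weakly_null {Γ : Type*}
    (X : Subspace ℝ (lp (fun _ : Γ => ℝ) ⊤))
    (hX0 : X ≤ c0Submodule Γ)
    (x : X) (u : ℕ → X)
    (hw : ∀ f : StrongDual ℝ X, Tendsto (fun n => f (u n)) atTop (𝓝 0)) :
    Filter.limsup (fun n => ‖u n + x‖) atTop
      = max ‖x‖ (Filter.limsup (fun n => ‖u n‖) atTop) := by
  obtain ⟨C, hC⟩ : ∃ C, ∀ n, ‖u n‖ ≤ C :=
    exists_forall_norm_le_of_forall_bddAbove_dual fun f => (hw f).norm.bddAbove_range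
  have hv : ∀ γ, Tendsto (fun n => (u n : lp (fun _ : Γ => ℝ) ⊤) γ) atTop (𝓝 0) :=
    fun γ => hw ((lp.evalCLM ℝ (fun _ : Γ => ℝ) ⊤ γ).comp X.subtypeL)
  have hx : Tendsto (fun γ => ‖(x : lp (fun _ : Γ => ℝ) ⊤) γ‖) cofinite (𝓝 0) :=
    tendsto_zero_iff_norm_tendsto_zero.1 (hX0 x.2)
  exact lp.limsup_norm_add_eq_max hv hx (isBoundedUnder_of ⟨C, hC⟩)
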